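/- arXiv:1802.06482 — 2 statements merged into one kernel-verified Lean document; each statement's English description precedes it below -/
import Mathlib

section
/- Let A ∈ ℝⁿˣⁿ and let L̃ be the projection of A obtained by setting Lᵢᵢ = max(Aᵢᵢ,0) and Lᵢⱼ = min(Aᵢⱼ,0) for i ≠ j with (i,j) ∈ E, zero otherwise. Define L by keeping the off-diagonal entries of L̃ and setting Lᵢᵢ = -Σ_{j≠i} L̃ᵢⱼ. Then L minimizes ‖A - X‖₁ over all X with X·𝟏 = 0, Xᵢᵢ ≥ 0, Xᵢⱼ ≤ 0 for i ≠ j, and Xᵢⱼ = 0 for (i,j) ∉ E with i ≠ j. -/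
/-!
The problem decouples over rows. Off the diagonal, the constraints on `X i j` are separable
(`X i j ≤ 0`, and `X i j = 0` off `E`), and `L i j` is the nearest feasible value to `A i j`;
since the feasible set is an interval, `L i j` lies between `A i j` and any feasible `X i j`,
so `|A i j - L i j| + |L i j - X i j| = |A i j - X i j|`. On the diagonal both `L` and `X` are
pinned by their zero row sums, so `|L i i - X i i|` is at most the off-diagonal ℓ¹ distance
`∑_{j ≠ i} |L i j - X i j|`, which is exactly the slack gained off the diagonal.
-/

open Finset

section LinearOrderedAddCommGroup

variable {G : Type*} [AddCommGroup G] [LinearOrder G] [IsOrderedAddMonoid G]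

theorem abs_sub_min_add_abs_min_sub {a b x : G} (hx : x ≤ b) :
    |a - min a b| + |min a b - x| = |a - x| := by
  rcases le_total a b with hab | hba
  · simp [min_eq_left hab]
  · rw [min_eq_right hba, abs_of_nonneg (sub_nonneg.2 hba), abs_of_nonneg (sub_nonneg.2 hx),
      abs_of_nonneg (sub_nonneg.2 (hx.trans hba)), sub_add_sub_cancel]

theorem sum_abs_sub_le_of_sum_eq {ι : Type*} [Fintype ι] [DecidableEq ι] (a l x : ι → G)
    (i : ι) (hsum : ∑ j, l j = ∑ j, x j)
    (hoff : ∀ j ≠ i, |a j - l j| + |l j - x j| ≤ |a j - x j|) :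
    ∑ j, |a j - l j| ≤ ∑ j, |a j - x j| := by
  have hdiag : x i - l i = ∑ j ∈ univ.erase i, (l j - x j) := by
    rw [← add_sum_erase _ _ (mem_univ i), ← add_sum_erase _ x (mem_univ i)] at hsum
    rw [sum_sub_distrib, eq_sub_iff_add_eq, sub_add_eq_add_sub, sub_eq_iff_eq_add, ← hsum,
      add_comm]
  calc ∑ j, |a j - l j|
      = |a i - l i| + ∑ j ∈ univ.erase i, |a j - l j| := (add_sum_erase _ _ (mem_univ i)).symm
    _ ≤ |a i - x i| + ∑ j ∈ univ.erase i, (|a j - l j| + |l j - x j|) := by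
      rw [sum_add_distrib, ← add_assoc, add_right_comm]
      gcongr
      calc |a i - l i| ≤ |a i - x i| + |x i - l i| := abs_sub_le _ _ _
        _ ≤ |a i - x i| + ∑ j ∈ univ.erase i, |l j - x j| := by
          rw [hdiag]
          gcongr
          exact abs_sum_le_sum_abs _ _
    _ ≤ |a i - x i| + ∑ j ∈ univ.erase i, |a j - x j| := by
      gcongr with j hj
      exact hoff j (ne_of_mem_erase hj)
    _ = ∑ j, |a j - x j| := add_sum_erase _ (fun j => |a j - x j|) (mem_univ i)

end LinearOrderedAddCommGroup

section Laplacian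

variable {ι : Type*} [Fintype ι]

theorem Matrix.mulVec_one_eq_zero_iff {R : Type*} [NonAssocSemiring R]
    (M : Matrix ι ι R) : M.mulVec (fun _ => 1) = 0 ↔ ∀ i, ∑ j, M i j = 0 := by
  simp [funext_iff, Matrix.mulVec, dotProduct]

theorem Matrix.diag_eq_neg_sum_offDiag_iff [DecidableEq ι] {R : Type*} [AddCommGroup R]
    (M : Matrix ι ι R) (i : ι) :
    M i i = -∑ j ∈ univ.erase i, M i j ↔ ∑ j, M i j = 0 := by
  rw [← add_sum_erase _ _ (mem_univ i), eq_neg_iff_add_eq_zero]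

theorem Matrix.diag_nonneg_of_sum_eq_zero [DecidableEq ι] {G : Type*} [AddCommGroup G]
    [LinearOrder G] [IsOrderedAddMonoid G] {M : Matrix ι ι G} (hsum : ∀ i, ∑ j, M i j = 0)
    (hoff : ∀ i j, i ≠ j → M i j ≤ 0) (i : ι) : 0 ≤ M i i := by
  rw [(M.diag_eq_neg_sum_offDiag_iff i).2 (hsum i), neg_nonneg]
  exact sum_nonpos fun j hj => hoff i j (ne_of_mem_erase hj).symm

end Laplacian

theorem stmt_15_general (n : ℕ) (A : Matrix (Fin n) (Fin n) ℝ)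
    (E : Finset (Fin n × Fin n))
    (Lt L : Matrix (Fin n) (Fin n) ℝ)
    (hLt : ∀ i j, Lt i j =
      if i = j then max (A i i) 0 else if (i, j) ∈ E then min (A i j) 0 else 0)
    (hLoff : ∀ i j, i ≠ j → L i j = Lt i j)
    (hLdiag : ∀ i, L i i = -∑ j ∈ Finset.univ.filter (· ≠ i), Lt i j) :
    (L.mulVec (fun _ => 1) = 0 ∧ (∀ i, 0 ≤ L i i) ∧
      (∀ i j, i ≠ j → L i j ≤ 0) ∧ (∀ i j, i ≠ j → (i, j) ∉ E → L i j = 0)) ∧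
    ∀ X : Matrix (Fin n) (Fin n) ℝ,
      X.mulVec (fun _ => 1) = 0 → (∀ i, 0 ≤ X i i) →
      (∀ i j, i ≠ j → X i j ≤ 0) → (∀ i j, i ≠ j → (i, j) ∉ E → X i j = 0) →
      ∑ i, ∑ j, |A i j - L i j| ≤ ∑ i, ∑ j, |A i j - X i j| := by
  have hL_offDiag (i j : Fin n) (hij : i ≠ j) :
      L i j = if (i, j) ∈ E then min (A i j) 0 else 0 := by
    rw [hLoff i j hij, hLt, if_neg hij]
  have hLnonpos (i j : Fin n) (hij : i ≠ j) : L i j ≤ 0 := by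
    rw [hL_offDiag i j hij]
    split_ifs
    exacts [min_le_right _ _, le_rfl]
  have hLsum (i : Fin n) : ∑ j, L i j = 0 := by
    rw [← L.diag_eq_neg_sum_offDiag_iff, hLdiag, filter_ne']
    exact congrArg _ (sum_congr rfl fun j hj => (hLoff i j (ne_of_mem_erase hj).symm).symm)
  refine ⟨⟨L.mulVec_one_eq_zero_iff.2 hLsum, Matrix.diag_nonneg_of_sum_eq_zero hLsum hLnonpos,
    hLnonpos, fun i j hij hE => by rw [hL_offDiag i j hij, if_neg hE]⟩, fun X hX1 _ hX3 hX4 => ?_⟩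
  refine sum_le_sum fun i _ => sum_abs_sub_le_of_sum_eq _ _ _ i
    ((hLsum i).trans (X.mulVec_one_eq_zero_iff.1 hX1 i).symm) fun j hji => ?_
  rw [hL_offDiag i j hji.symm]
  split_ifs with hE
  · exact (abs_sub_min_add_abs_min_sub (hX3 i j hji.symm)).le
  · simp [hX4 i j hji.symm hE]

/-- Theorem 1 (correctness of Algorithm 1): the matrix `L` obtained from the
entrywise projection `L̃` of `A` by resetting each diagonal entry to minus the
off-diagonal row sum minimizes `‖A - X‖₁` over all graph Laplacians with
support in `E`. -/
theorem stmt_15 (n : ℕ) (A : Matrix (Fin n) (Fin n) ℝ)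
    (E : Finset (Fin n × Fin n)) (hE : ∀ p ∈ E, p.1 ≠ p.2)
    (Lt L : Matrix (Fin n) (Fin n) ℝ)
    (hLt : ∀ i j, Lt i j =
      if i = j then max (A i i) 0 else if (i, j) ∈ E then min (A i j) 0 else 0)
    (hLoff : ∀ i j, i ≠ j → L i j = Lt i j)
    (hLdiag : ∀ i, L i i = -∑ j ∈ Finset.univ.filter (· ≠ i), Lt i j) :
    (L.mulVec (fun _ => 1) = 0 ∧ (∀ i, 0 ≤ L i i) ∧
      (∀ i j, i ≠ j → L i j ≤ 0) ∧ (∀ i j, i ≠ j → (i, j) ∉ E → L i j = 0)) ∧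
    ∀ X : Matrix (Fin n) (Fin n) ℝ,
      X.mulVec (fun _ => 1) = 0 → (∀ i, 0 ≤ X i i) →
      (∀ i j, i ≠ j → X i j ≤ 0) → (∀ i j, i ≠ j → (i, j) ∉ E → X i j = 0) →
      ∑ i, ∑ j, |A i j - L i j| ≤ ∑ i, ∑ j, |A i j - X i j| :=
  stmt_15_general n A E Lt L hLt hLoff hLdiag
end

section
/- Suppose A ∈ ℝⁿˣⁿ has nonnegative diagonal, nonpositive off-diagonal entries, and Σⱼ Aᵢⱼ > 0 for a fixed row i. Then Lᵢⱼ := Aᵢⱼ - (Σₖ Aᵢₖ)/n satisfies Lᵢᵢ ≥ 0 and Lᵢⱼ ≤ 0 for j ≠ i, and (Lᵢ₁,...,Lᵢₙ) is the unique minimizer of Σⱼ (Lᵢⱼ - Aᵢⱼ)² subject to Σⱼ Lᵢⱼ = 0, Lᵢᵢ ≥ 0, and Lᵢⱼ ≤ 0 for j ≠ i. -/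
/-!
Put `c = (∑ₖ Aᵢₖ)/n` and `x = Aᵢ - c`. The vector `x` lies on the hyperplane `∑ⱼ yⱼ = 0` and
`x - Aᵢ` is constant, so for `y` on the hyperplane the cross term `2c ∑ⱼ (yⱼ - xⱼ)` vanishes and
`‖y - Aᵢ‖² = ‖y - x‖² + ‖x - Aᵢ‖²`: `x` is the unique closest point of the hyperplane, a fortiori
of the part of it cut out by the sign constraints, provided `x` satisfies them. It does, since
`c ≥ 0` and, the off-diagonal entries being nonpositive, `Aᵢᵢ ≥ ∑ₖ Aᵢₖ = n c ≥ c`.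
-/

open Finset

section

variable {ι : Type*} [Fintype ι]

lemma sum_le_apply_of_forall_ne_nonpos {f : ι → ℝ} (i : ι) (h : ∀ j, j ≠ i → f j ≤ 0) :
    ∑ j, f j ≤ f i := by
  classical
  rw [← add_sum_erase _ _ (mem_univ i)]
  have : ∑ j ∈ univ.erase i, f j ≤ 0 := sum_nonpos fun j hj => h j (ne_of_mem_erase hj)
  linarith

lemma sum_sub_sum_div_card [Nonempty ι] (a : ι → ℝ) :
    ∑ j, (a j - (∑ k, a k) / Fintype.card ι) = 0 := by
  rw [sum_sub_distrib, sum_const, card_univ, nsmul_eq_mul,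
    mul_div_cancel₀ _ (Nat.cast_ne_zero.mpr Fintype.card_ne_zero), sub_self]

lemma sum_sq_sub_eq_of_sub_const {a x y : ι → ℝ} (c : ℝ) (hx : ∀ j, x j = a j + c)
    (hxy : ∑ j, x j = ∑ j, y j) :
    ∑ j, (y j - a j) ^ 2 = ∑ j, (y j - x j) ^ 2 + ∑ j, (x j - a j) ^ 2 := by
  have h : ∀ j, (y j - a j) ^ 2 = (y j - x j) ^ 2 + (x j - a j) ^ 2 + 2 * c * (y j - x j) := by
    intro j
    rw [hx j]
    ring
  simp only [h, sum_add_distrib, ← mul_sum, sum_sub_distrib, hxy, sub_self, mul_zero, add_zero]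

lemma sum_sq_sub_le_of_sub_const {a x y : ι → ℝ} (c : ℝ) (hx : ∀ j, x j = a j + c)
    (hxy : ∑ j, x j = ∑ j, y j) :
    ∑ j, (x j - a j) ^ 2 ≤ ∑ j, (y j - a j) ^ 2 := by
  rw [sum_sq_sub_eq_of_sub_const c hx hxy]
  exact le_add_of_nonneg_left (sum_nonneg fun j _ => sq_nonneg _)

lemma eq_of_sum_sq_sub_le_of_sub_const {a x y : ι → ℝ} (c : ℝ) (hx : ∀ j, x j = a j + c)
    (hxy : ∑ j, x j = ∑ j, y j) (hy : ∑ j, (y j - a j) ^ 2 ≤ ∑ j, (x j - a j) ^ 2) :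
    y = x := by
  rw [sum_sq_sub_eq_of_sub_const c hx hxy, add_le_iff_nonpos_left] at hy
  have hzero := (sum_eq_zero_iff_of_nonneg fun j _ => sq_nonneg (y j - x j)).mp
    (le_antisymm hy (sum_nonneg fun j _ => sq_nonneg _))
  funext j
  exact sub_eq_zero.mp (pow_eq_zero_iff two_ne_zero |>.mp (hzero j (mem_univ j)))

end

theorem stmt_17_general (n : ℕ) (A : Matrix (Fin n) (Fin n) ℝ) (i : Fin n)
    (hoff : ∀ j, j ≠ i → A i j ≤ 0)
    (hpos : 0 < ∑ j, A i j)
    (x : Fin n → ℝ) (hx : ∀ j, x j = A i j - (∑ k, A i k) / n) :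
    (0 ≤ x i) ∧ (∀ j, j ≠ i → x j ≤ 0) ∧ (∑ j, x j = 0) ∧
    (∀ y : Fin n → ℝ, (∑ j, y j = 0) → 0 ≤ y i → (∀ j, j ≠ i → y j ≤ 0) →
      ∑ j, (x j - A i j) ^ 2 ≤ ∑ j, (y j - A i j) ^ 2) ∧
    (∀ y : Fin n → ℝ, (∑ j, y j = 0) → 0 ≤ y i → (∀ j, j ≠ i → y j ≤ 0) →
      (∀ z : Fin n → ℝ, (∑ j, z j = 0) → 0 ≤ z i → (∀ j, j ≠ i → z j ≤ 0) →
        ∑ j, (y j - A i j) ^ 2 ≤ ∑ j, (z j - A i j) ^ 2) → y = x) := by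
  have : Nonempty (Fin n) := ⟨i⟩
  have hx_sum : ∑ j, x j = 0 := by
    simpa only [← hx, Fintype.card_fin] using sum_sub_sum_div_card (A i)
  have hxA : ∀ j, x j = A i j + -((∑ k, A i k) / n) := fun j => by rw [hx]; ring
  have hc : 0 ≤ (∑ k, A i k) / n := by positivity
  have hc_le : (∑ k, A i k) / n ≤ ∑ k, A i k := div_le_self hpos.le (by exact_mod_cast i.pos)
  have hxi : 0 ≤ x i := by
    rw [hx]
    linarith [sum_le_apply_of_forall_ne_nonpos i hoff]
  have hx_off : ∀ j, j ≠ i → x j ≤ 0 := fun j hj => by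
    rw [hx]
    linarith [hoff j hj]
  refine ⟨hxi, hx_off, hx_sum, fun y hy _ _ => ?_, fun y hy _ _ hmin => ?_⟩
  · exact sum_sq_sub_le_of_sub_const _ hxA (hx_sum.trans hy.symm)
  · exact eq_of_sum_sq_sub_le_of_sub_const _ hxA (hx_sum.trans hy.symm)
      (hmin x hx_sum hxi hx_off)

/-- Positive-row-sum case for the 2-norm variant: if row `i` of `A` has
nonnegative diagonal, nonpositive off-diagonal entries and positive row sum,
then `Lᵢⱼ = Aᵢⱼ - (∑ k, Aᵢₖ)/n` satisfies the sign constraints and is the unique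
minimizer of `∑ j, (Lᵢⱼ - Aᵢⱼ)²` subject to `∑ j, Lᵢⱼ = 0`, `Lᵢᵢ ≥ 0`,
`Lᵢⱼ ≤ 0` for `j ≠ i`. -/
theorem stmt_17 (n : ℕ) (hn : 2 ≤ n) (A : Matrix (Fin n) (Fin n) ℝ) (i : Fin n)
    (hdiag : 0 ≤ A i i) (hoff : ∀ j, j ≠ i → A i j ≤ 0)
    (hpos : 0 < ∑ j, A i j)
    (x : Fin n → ℝ) (hx : ∀ j, x j = A i j - (∑ k, A i k) / n) :
    (0 ≤ x i) ∧ (∀ j, j ≠ i → x j ≤ 0) ∧ (∑ j, x j = 0) ∧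
    (∀ y : Fin n → ℝ, (∑ j, y j = 0) → 0 ≤ y i → (∀ j, j ≠ i → y j ≤ 0) →
      ∑ j, (x j - A i j) ^ 2 ≤ ∑ j, (y j - A i j) ^ 2) ∧
    (∀ y : Fin n → ℝ, (∑ j, y j = 0) → 0 ≤ y i → (∀ j, j ≠ i → y j ≤ 0) →
      (∀ z : Fin n → ℝ, (∑ j, z j = 0) → 0 ≤ z i → (∀ j, j ≠ i → z j ≤ 0) →
        ∑ j, (y j - A i j) ^ 2 ≤ ∑ j, (z j - A i j) ^ 2) → y = x) :=
  stmt_17_general n A i hoff hpos x hx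
end
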